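/- arXiv:1912.11220 — 2 statements merged into one kernel-verified Lean document; each statement's English description precedes it below -/
import Mathlib

section
/- Let p be a prime and let M be an even lattice of level exactly p. Let v ∈ M be a primitive vector with (v,v) > 0, and let σ_v be the reflection on M⊗ℚ defined by σ_v(x) = x − (2(x,v)/(v,v))·v. Then σ_v(M) = M if and only if either (v,v) = 2, or (v,v) = 2p and (v,l) ∈ pℤ for all l ∈ M (equivalently v/p ∈ M^∨). -/
open Matrix

namespace LatQ

variable {ι κ : Type*} [Fintype ι] [Fintype κ]

/-- The bilinear form on `ι → ℚ` given by the matrix `F`. -/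
def bform (F : Matrix ι ι ℚ) (x y : ι → ℚ) : ℚ := x ⬝ᵥ F *ᵥ y

/-- A rational number is an integer. -/
def isIntQ (q : ℚ) : Prop := ∃ m : ℤ, q = (m : ℚ)

lemma isIntQ_add {a b : ℚ} (ha : isIntQ a) (hb : isIntQ b) : isIntQ (a + b) := by
  obtain ⟨m, rfl⟩ := ha; obtain ⟨n, rfl⟩ := hb; exact ⟨m + n, by push_cast; ring⟩

lemma bform_add_left (F : Matrix ι ι ℚ) (a b y : ι → ℚ) :
    bform F (a + b) y = bform F a y + bform F b y := add_dotProduct a b _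

lemma bform_zero_left (F : Matrix ι ι ℚ) (y : ι → ℚ) : bform F 0 y = 0 := zero_dotProduct _

lemma bform_zsmul_left (F : Matrix ι ι ℚ) (c : ℤ) (x y : ι → ℚ) :
    bform F (c • x) y = (c : ℚ) * bform F x y := by
  unfold bform
  rw [← Int.cast_smul_eq_zsmul ℚ c x, smul_dotProduct, smul_eq_mul]

/-- The dual lattice of `L` with respect to the form `F`, inside the ambient space `ι → ℚ`. -/
def dual (F : Matrix ι ι ℚ) (L : Submodule ℤ (ι → ℚ)) : Submodule ℤ (ι → ℚ) where
  carrier := {x | ∀ y ∈ L, isIntQ (bform F x y)}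
  zero_mem' := fun y _ => ⟨0, by simp [bform_zero_left]⟩
  add_mem' := fun ha hb y hy => by
    have := isIntQ_add (ha y hy) (hb y hy)
    rwa [← bform_add_left] at this
  smul_mem' := fun c x hx y hy => by
    obtain ⟨m, hm⟩ := hx y hy
    exact ⟨c * m, by rw [bform_zsmul_left, hm]; push_cast; ring⟩

/-- The standard lattice `ℤ^ι` inside `ℚ^ι`. -/
def stdLat (ι : Type*) : Submodule ℤ (ι → ℚ) where
  carrier := {x | ∀ i, isIntQ (x i)}
  zero_mem' := fun i => ⟨0, by simp⟩
  add_mem' := fun ha hb i => isIntQ_add (ha i) (hb i)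
  smul_mem' := fun c x hx i => by
    obtain ⟨m, hm⟩ := hx i
    exact ⟨c * m, by rw [Pi.smul_apply, hm, zsmul_eq_mul]; push_cast; ring⟩

/-- `L` is an even lattice (of full rank) in `(ι → ℚ, bform F)`. -/
structure IsEvenLattice [DecidableEq ι] (F : Matrix ι ι ℚ) (L : Submodule ℤ (ι → ℚ)) : Prop where
  fg : L.FG
  spans : Submodule.span ℚ (L : Set (ι → ℚ)) = ⊤
  symm : F.IsSymm
  nondeg : F.det ≠ 0
  integral : ∀ x ∈ L, ∀ y ∈ L, isIntQ (bform F x y)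
  even : ∀ x ∈ L, ∃ m : ℤ, bform F x x = 2 * m

/-- The real quadratic form of `F` diagonalizes with `bp` positive and `bm` negative entries. -/
def HasSignature [DecidableEq ι] (F : Matrix ι ι ℚ) (bp bm : ℕ) : Prop :=
  ∃ P : Matrix ι ι ℝ, IsUnit P.det ∧ (Pᵀ * F.map ((↑) : ℚ → ℝ) * P).IsDiag ∧
    Nat.card {i : ι // 0 < (Pᵀ * F.map ((↑) : ℚ → ℝ) * P) i i} = bp ∧
    Nat.card {i : ι // (Pᵀ * F.map ((↑) : ℚ → ℝ) * P) i i < 0} = bm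

/-- `N` is the level of the even lattice `L`: the smallest positive integer with
`N·(x,x) ∈ 2ℤ` for all `x` in the dual lattice. -/
def HasLevel (F : Matrix ι ι ℚ) (L : Submodule ℤ (ι → ℚ)) (N : ℕ) : Prop :=
  0 < N ∧ (∀ x ∈ dual F L, ∃ m : ℤ, (N : ℚ) * bform F x x = 2 * m) ∧
    ∀ N' : ℕ, 0 < N' → (∀ x ∈ dual F L, ∃ m : ℤ, (N' : ℚ) * bform F x x = 2 * m) → N ≤ N'

/-- The order of the discriminant group `L^∨/L`. -/
noncomputable def discCard (F : Matrix ι ι ℚ) (L : Submodule ℤ (ι → ℚ)) : ℕ :=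
  Nat.card ((↥(dual F L)) ⧸ (Submodule.comap (dual F L).subtype L))

/-- Two lattices (with ambient forms) are isometric. -/
def Isometric (F : Matrix ι ι ℚ) (L : Submodule ℤ (ι → ℚ))
    (F' : Matrix κ κ ℚ) (L' : Submodule ℤ (κ → ℚ)) : Prop :=
  ∃ e : L ≃ₗ[ℤ] L', ∀ x y : L,
    bform F' ((e x : κ → ℚ)) ((e y : κ → ℚ)) = bform F (x : ι → ℚ) (y : ι → ℚ)

/-- The isometry group `O(L)` of the lattice `L` with form `F`. -/
def OGroup (F : Matrix ι ι ℚ) (L : Submodule ℤ (ι → ℚ)) : Subgroup (↥L ≃ₗ[ℤ] ↥L) where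
  carrier := {e | ∀ x y : L,
    bform F ((e x : ι → ℚ)) ((e y : ι → ℚ)) = bform F (x : ι → ℚ) (y : ι → ℚ)}
  one_mem' := fun x y => rfl
  mul_mem' := fun {a b} ha hb x y => by
    have h1 : ∀ z : L, (a * b) z = a (b z) := fun z => rfl
    rw [h1, h1, ha, hb]
  inv_mem' := fun {a} ha x y => by
    have h := ha (a⁻¹ x) (a⁻¹ y)
    have hx : a (a⁻¹ x) = x := a.apply_symm_apply x
    have hy : a (a⁻¹ y) = y := a.apply_symm_apply y
    rw [hx, hy] at h
    exact h.symm

/-- Orthogonal direct sum of forms. -/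
def oplusF (F : Matrix ι ι ℚ) (G : Matrix κ κ ℚ) : Matrix (ι ⊕ κ) (ι ⊕ κ) ℚ :=
  Matrix.fromBlocks F 0 0 G

/-- Orthogonal direct sum of lattices. -/
def oplusL (L : Submodule ℤ (ι → ℚ)) (M : Submodule ℤ (κ → ℚ)) :
    Submodule ℤ (ι ⊕ κ → ℚ) where
  carrier := {x | (fun i => x (Sum.inl i)) ∈ L ∧ (fun j => x (Sum.inr j)) ∈ M}
  zero_mem' := ⟨L.zero_mem, M.zero_mem⟩
  add_mem' := fun ha hb => ⟨L.add_mem ha.1 hb.1, M.add_mem ha.2 hb.2⟩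
  smul_mem' := fun c _ hx => ⟨L.smul_mem c hx.1, M.smul_mem c hx.2⟩

end LatQ

/-!
Since `σ_v` is an involution, `σ_v(M) = M` as soon as `σ_v(M) ⊆ M`, and as `v` is primitive this
holds iff `2(x,v)/(v,v) ∈ ℤ` for all `x ∈ M`. Writing `(v,v) = 2a`, this says `v/a ∈ M^∨`, so the
level condition `p (v/a, v/a) = 2p/a ∈ 2ℤ` forces `a ∣ p`, i.e. `a = 1` or `a = p`.
-/

theorem Function.Involutive.image_eq_self_iff_mapsTo {α : Type*} {f : α → α}
    (hf : f.Involutive) {s : Set α} : f '' s = s ↔ Set.MapsTo f s s := by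
  refine ⟨fun h x hx => h ▸ ⟨x, hx, rfl⟩, fun h => ?_⟩
  exact (Set.mapsTo_iff_image_subset.mp h).antisymm fun x hx => ⟨f x, h hx, hf x⟩

namespace LatQ

section

variable {ι : Type*} [Fintype ι] (F : Matrix ι ι ℚ)

lemma bform_comm (hF : F.IsSymm) (x y : ι → ℚ) : bform F x y = bform F y x := by
  unfold bform
  rw [dotProduct_mulVec, ← mulVec_transpose, hF.eq, dotProduct_comm]

lemma bform_smul_left (c : ℚ) (x y : ι → ℚ) : bform F (c • x) y = c * bform F x y :=
  smul_dotProduct c x _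

lemma bform_smul_right (c : ℚ) (x y : ι → ℚ) : bform F x (c • y) = c * bform F x y := by
  unfold bform; rw [mulVec_smul, dotProduct_smul, smul_eq_mul]

lemma bform_sub_left (a b y : ι → ℚ) : bform F (a - b) y = bform F a y - bform F b y :=
  sub_dotProduct a b _

def reflection (v : ι → ℚ) (x : ι → ℚ) : ι → ℚ :=
  x - (2 * bform F x v / bform F v v) • v

variable {F}

lemma bform_reflection_left {v : ι → ℚ} (hv : bform F v v ≠ 0) (x : ι → ℚ) :
    bform F (reflection F v x) v = -bform F x v := by
  rw [reflection, bform_sub_left, bform_smul_left]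
  field_simp
  ring

lemma reflection_involutive {v : ι → ℚ} (hv : bform F v v ≠ 0) :
    (reflection F v).Involutive := fun x => by
  rw [reflection, bform_reflection_left hv, reflection, sub_sub, ← add_smul, mul_neg,
    neg_div, add_neg_cancel, zero_smul, sub_zero]

variable {L : Submodule ℤ (ι → ℚ)} {v : ι → ℚ}

lemma mapsTo_reflection_iff (hv : v ∈ L) (hprim : ∀ c : ℚ, c • v ∈ L → ∃ m : ℤ, c = m) :
    Set.MapsTo (reflection F v) L L ↔ ∀ x ∈ L, ∃ m : ℤ, 2 * bform F x v / bform F v v = m := by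
  constructor
  · intro h x hx
    apply hprim
    simpa [reflection] using L.sub_mem hx (h hx)
  · intro h x hx
    obtain ⟨m, hm⟩ := h x hx
    rw [SetLike.mem_coe, reflection, hm, Int.cast_smul_eq_zsmul]
    exact L.sub_mem hx (L.smul_mem m hv)

lemma dvd_level_of_forall_dvd_bform {N : ℕ} (hN : HasLevel F L N) {a : ℤ}
    (ha : a ≠ 0) (hvv : bform F v v = 2 * a) (hdvd : ∀ x ∈ L, ∃ m : ℤ, bform F v x = a * m) :
    a ∣ N := by
  have hdual : (a : ℚ)⁻¹ • v ∈ dual F L := fun x hx => by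
    obtain ⟨m, hm⟩ := hdvd x hx
    exact ⟨m, by rw [bform_smul_left, hm]; field_simp⟩
  obtain ⟨m, hm⟩ := hN.2.1 _ hdual
  rw [bform_smul_left, bform_smul_right, hvv] at hm
  field_simp at hm
  exact ⟨m, by exact_mod_cast hm⟩

end

/-- Let `M` be an even lattice of level exactly `p` (a prime) and
`v ∈ M` a primitive vector with `(v,v) > 0`.  The reflection
`σ_v(x) = x - (2(x,v)/(v,v))·v` maps `M` onto itself if and only if `(v,v) = 2`, or
`(v,v) = 2p` and `(v,l) ∈ pℤ` for all `l ∈ M`. -/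
theorem statement5 {ι : Type*} [Fintype ι] [DecidableEq ι] (p : ℕ) (hp : p.Prime)
    (F : Matrix ι ι ℚ) (L : Submodule ℤ (ι → ℚ))
    (hL : IsEvenLattice F L) (hlev : HasLevel F L p)
    (v : ι → ℚ) (hv : v ∈ L)
    (hprim : ∀ c : ℚ, c • v ∈ L → ∃ m : ℤ, c = (m : ℚ))
    (hpos : 0 < bform F v v) :
    (fun x => x - (2 * bform F x v / bform F v v) • v) '' (L : Set (ι → ℚ)) = L ↔
      (bform F v v = 2 ∨
        (bform F v v = 2 * p ∧ ∀ l ∈ L, ∃ m : ℤ, bform F v l = p * m)) := by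
  obtain ⟨a, hvv⟩ := hL.even v hv
  have ha : 0 < a := by
    have : (0 : ℚ) < a := by linarith
    exact_mod_cast this
  have hcoef (x : ι → ℚ) :
      (∃ m : ℤ, 2 * bform F x v / bform F v v = m) ↔ ∃ m : ℤ, bform F v x = a * m := by
    refine exists_congr fun m => ?_
    rw [bform_comm F hL.symm x v, hvv]
    constructor <;> intro h <;> field_simp at h ⊢ <;> linarith
  change reflection F v '' L = L ↔ _
  simp_rw [(reflection_involutive hpos.ne').image_eq_self_iff_mapsTo,
    mapsTo_reflection_iff hv hprim, hcoef]
  lift a to ℕ using ha.le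
  push_cast at hvv ⊢
  rw [hvv]
  constructor
  · intro hdvd
    have hap : a ∣ p := by exact_mod_cast dvd_level_of_forall_dvd_bform hlev (by omega) hvv hdvd
    rcases hp.eq_one_or_self_of_dvd a hap with rfl | rfl
    · left; norm_num
    · right; exact ⟨rfl, hdvd⟩
  · rintro (h2 | ⟨h2p, hdvd⟩)
    · obtain rfl : a = 1 := by exact_mod_cast (by linarith : (a : ℚ) = 1)
      intro x hx
      simpa [isIntQ] using hL.integral v hv x hx
    · obtain rfl : a = p := by exact_mod_cast (by linarith : (a : ℚ) = p)
      exact hdvd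

end LatQ
end

section
/- Let p ≥ 7 be a prime with p ≡ 3 (mod 4), and let L_p be the lattice ℤ² with Gram matrix [[2,1],[1,(p+1)/2]]. Then L_p is a positive definite even lattice of determinant p and level p, and moreover #{v ∈ L_p : (v,v) = 2} = 2 and #{v ∈ L_p : (v,v) = 2p and (v,x) ∈ pℤ for all x ∈ L_p} = 2. (That is, the root system of L_p is A₁ ⊕ A₁(p).) -/
/-! Completing the square, `2 (v, v) = (2a + b)² + p b²` for `v = (a, b)`, gives positivity, and
since `p > 4` it pins down the vectors of norm `2` (`b = 0`) and those of norm `2p` in `p L^∨`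
(there `p ∣ (v, e₀) = 2a + b`, so `b² + p t² = 4` with `2a + b = p t`). The dual lattice is
`G⁻¹ ℤ²` and `p G⁻¹ = adj G = [[q, -1], [-1, 2]]` with `q = (p + 1) / 2` even, so `p (x, x) ∈ 2ℤ`
on `L^∨`; conversely `G⁻¹ e₀` has norm `q / p` with `q` prime to `p`, so the level is exactly `p`. -/

open Matrix

namespace LatQ

section Gram

variable {R : Type*} [CommRing R] (q : R)

theorem vecMul_gram (x : Fin 2 → R) :
    x ᵥ* !![2, 1; 1, q] = ![2 * x 0 + x 1, x 0 + q * x 1] := by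
  ext j; fin_cases j <;> simp [vecMul, dotProduct, Fin.sum_univ_two] <;> ring

theorem dotProduct_gram_mulVec (v w : Fin 2 → R) :
    v ⬝ᵥ !![2, 1; 1, q] *ᵥ w = (2 * v 0 + v 1) * w 0 + (v 0 + q * v 1) * w 1 := by
  rw [dotProduct_mulVec, vecMul_gram, vec2_dotProduct]; rfl

theorem two_mul_norm_gram (v : Fin 2 → R) :
    2 * (v ⬝ᵥ !![2, 1; 1, q] *ᵥ v) = (2 * v 0 + v 1) ^ 2 + (2 * q - 1) * v 1 ^ 2 := by
  rw [dotProduct_gram_mulVec]; ring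

theorem det_gram : (!![2, 1; 1, q]).det = 2 * q - 1 := by
  rw [det_fin_two_of]; ring

theorem two_dvd_norm_gram {q : R} (hq : Even q) (v : Fin 2 → R) :
    2 ∣ v ⬝ᵥ !![2, 1; 1, q] *ᵥ v := by
  obtain ⟨k, rfl⟩ := hq
  exact ⟨v 0 ^ 2 + v 0 * v 1 + k * v 1 ^ 2, by rw [dotProduct_gram_mulVec]; ring⟩

end Gram

theorem norm_gram_pos {R : Type*} [CommRing R] [LinearOrder R] [IsStrictOrderedRing R] {q : R}
    (hq : 0 < 2 * q - 1) {v : Fin 2 → R} (hv : v ≠ 0) : 0 < v ⬝ᵥ !![2, 1; 1, q] *ᵥ v := by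
  have hpos : 0 < (2 * v 0 + v 1) ^ 2 + (2 * q - 1) * v 1 ^ 2 := by
    by_cases h1 : v 1 = 0
    · have h0 : v 0 ≠ 0 := fun h0 => hv (by ext i; fin_cases i <;> simp [h0, h1])
      simpa [h1] using (by positivity : 0 < (2 * v 0) ^ 2)
    · exact add_pos_of_nonneg_of_pos (sq_nonneg _) (mul_pos hq (by positivity))
  linarith [two_mul_norm_gram q v]

theorem mem_dual_stdLat_iff {ι : Type*} [Fintype ι] [DecidableEq ι] {F : Matrix ι ι ℚ}
    {x : ι → ℚ} : x ∈ dual F (stdLat ι) ↔ ∀ j, isIntQ ((x ᵥ* F) j) := by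
  have hform : ∀ y, bform F x y = (x ᵥ* F) ⬝ᵥ y := fun y => dotProduct_mulVec x F y
  refine ⟨fun hx j => ?_, fun hx y hy => ?_⟩
  · have hj : Pi.single j 1 ∈ stdLat ι := fun i => by
      by_cases h : i = j
      · exact ⟨1, by simp [h]⟩
      · exact ⟨0, by simp [h]⟩
    simpa [hform, dotProduct_single_one] using hx _ hj
  · choose m hm using hx
    choose n hn using hy
    exact ⟨∑ i, m i * n i, by simp [hform, dotProduct, hm, hn]⟩

theorem gram_map_intCast (q : ℤ) :
    (!![2, 1; 1, q]).map ((↑) : ℤ → ℚ) = !![2, 1; 1, (q : ℚ)] := by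
  ext i j; fin_cases i <;> fin_cases j <;> simp

theorem mem_dual_gram_iff (q : ℚ) {x : Fin 2 → ℚ} :
    x ∈ dual !![2, 1; 1, q] (stdLat (Fin 2)) ↔
      isIntQ (2 * x 0 + x 1) ∧ isIntQ (x 0 + q * x 1) := by
  rw [mem_dual_stdLat_iff, Fin.forall_fin_two, vecMul_gram]; simp

section Level

variable {p : ℕ} {q : ℤ}

theorem two_dvd_mul_norm_of_mem_dual_gram (hq : 2 * q = p + 1) (hev : Even q) {x : Fin 2 → ℚ}
    (hx : x ∈ dual !![2, 1; 1, (q : ℚ)] (stdLat (Fin 2))) :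
    ∃ m : ℤ, (p : ℚ) * bform !![2, 1; 1, (q : ℚ)] x x = 2 * m := by
  obtain ⟨⟨m₀, hm₀⟩, ⟨m₁, hm₁⟩⟩ := (mem_dual_gram_iff q).mp hx
  obtain ⟨k, hk⟩ := hev
  have hqQ : 2 * (q : ℚ) = p + 1 := by exact_mod_cast hq
  have hkQ : (q : ℚ) = k + k := by exact_mod_cast hk
  -- `x = G⁻¹ m` with `m = G x` integral, and `p • G⁻¹ = adj G = !![q, -1; -1, 2]`
  -- has even diagonal.
  refine ⟨k * m₀ ^ 2 - m₀ * m₁ + m₁ ^ 2, ?_⟩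
  rw [bform, dotProduct_gram_mulVec]
  push_cast
  linear_combination (p * x 0 + q * m₀ - m₁) * hm₀ + (p * x 1 + 2 * m₁ - m₀) * hm₁
    - (x 0 * m₀ + x 1 * m₁) * hqQ + m₀ ^ 2 * hkQ

theorem le_of_two_dvd_mul_norm_gram (hq : 2 * q = p + 1) {N : ℕ} (hN : 0 < N)
    (h : ∀ x ∈ dual !![2, 1; 1, (q : ℚ)] (stdLat (Fin 2)),
      ∃ m : ℤ, (N : ℚ) * bform !![2, 1; 1, (q : ℚ)] x x = 2 * m) : p ≤ N := by
  have hqQ : 2 * (q : ℚ) = p + 1 := by exact_mod_cast hq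
  have hp : (p : ℚ) ≠ 0 := by norm_cast; omega
  -- the dual vector `G⁻¹ e₀`, of norm `q / p`
  set x : Fin 2 → ℚ := ![q / p, -1 / p]
  have hGx₀ : 2 * x 0 + x 1 = 1 := by
    simp only [x, cons_val_zero, cons_val_one]
    field_simp
    linarith
  have hGx₁ : x 0 + q * x 1 = 0 := by
    simp only [x, cons_val_zero, cons_val_one]
    ring
  have hx : x ∈ dual !![2, 1; 1, (q : ℚ)] (stdLat (Fin 2)) :=
    (mem_dual_gram_iff q).mpr ⟨⟨1, by rw [hGx₀]; simp⟩, ⟨0, by rw [hGx₁]; simp⟩⟩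
  have hnorm : bform !![2, 1; 1, (q : ℚ)] x x = q / p := by
    rw [bform, dotProduct_gram_mulVec, hGx₀, hGx₁]
    simp [x]
  obtain ⟨m, hm⟩ := h x hx
  rw [hnorm, mul_div_assoc', div_eq_iff hp] at hm
  have hNq : (N * q : ℤ) = p * (2 * m) := by
    exact_mod_cast (by rw [hm]; ring : (N * q : ℚ) = p * (2 * m))
  have hcop : IsCoprime (p : ℤ) q := ⟨-1, 2, by linarith⟩
  exact Nat.le_of_dvd hN (Int.natCast_dvd_natCast.mp (hcop.dvd_of_dvd_mul_right ⟨2 * m, hNq⟩))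

theorem hasLevel_gram (hq : 2 * q = p + 1) (hev : Even q) :
    HasLevel ((!![2, 1; 1, q]).map ((↑) : ℤ → ℚ)) (stdLat (Fin 2)) p := by
  rw [gram_map_intCast]
  exact ⟨by omega, fun x hx => two_dvd_mul_norm_of_mem_dual_gram hq hev hx,
    fun N hN h => le_of_two_dvd_mul_norm_gram hq hN h⟩

end Level

theorem card_subtype_eq_two_of_iff {α : Type*} {P : α → Prop} {a b : α} (hab : a ≠ b)
    (h : ∀ v, P v ↔ v = a ∨ v = b) : Nat.card {v // P v} = 2 := by
  have hset : {v | P v} = {a, b} := by ext v; simp [h]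
  rw [← Set.ncard_pair hab, ← hset, ← Nat.card_coe_set_eq]
  rfl

theorem eq_zero_of_sq_add_mul_sq_eq_four {n X Y : ℤ} (hn : 4 < n) (h : X ^ 2 + n * Y ^ 2 = 4) :
    Y = 0 ∧ (X = 2 ∨ X = -2) := by
  have hY : Y ^ 2 < 1 := by nlinarith [sq_nonneg X, sq_nonneg Y]
  have hY0 : Y = 0 := pow_eq_zero_iff two_ne_zero |>.mp (by linarith [sq_nonneg Y])
  subst hY0
  have : (X - 2) * (X + 2) = 0 := by linear_combination h
  rcases mul_eq_zero.mp this with h' | h'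
  exacts [⟨rfl, Or.inl (by linarith)⟩, ⟨rfl, Or.inr (by linarith)⟩]

theorem vec2_eq_iff {R : Type*} {v : Fin 2 → R} {a b : R} :
    v = ![a, b] ↔ v 0 = a ∧ v 1 = b := by
  simp [funext_iff, Fin.forall_fin_two]

theorem norm_gram_eq_two_iff {q : ℤ} (hq : 3 ≤ q) (v : Fin 2 → ℤ) :
    v ⬝ᵥ !![2, 1; 1, q] *ᵥ v = 2 ↔ v = ![1, 0] ∨ v = ![-1, 0] := by
  constructor
  · intro h
    have h4 : (2 * v 0 + v 1) ^ 2 + (2 * q - 1) * v 1 ^ 2 = 4 := by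
      rw [← two_mul_norm_gram, h]; norm_num
    obtain ⟨h1, h0 | h0⟩ := eq_zero_of_sq_add_mul_sq_eq_four (by omega) h4 <;>
      simp only [vec2_eq_iff] <;> omega
  · rintro (rfl | rfl) <;> rw [dotProduct_gram_mulVec] <;> simp

theorem norm_gram_eq_and_dvd_iff {p q : ℤ} (hq : 2 * q = p + 1) (hp : 4 < p) (v : Fin 2 → ℤ) :
    (v ⬝ᵥ !![2, 1; 1, q] *ᵥ v = 2 * p ∧ ∀ x, p ∣ v ⬝ᵥ !![2, 1; 1, q] *ᵥ x) ↔
      v = ![-1, 2] ∨ v = ![1, -2] := by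
  constructor
  · rintro ⟨hnorm, hdvd⟩
    obtain ⟨t, ht⟩ : p ∣ 2 * v 0 + v 1 := by
      simpa only [dotProduct_gram_mulVec, cons_val_zero, cons_val_one, mul_one, mul_zero,
        add_zero] using hdvd ![1, 0]
    have h4 : v 1 ^ 2 + p * t ^ 2 = 4 := by
      refine mul_left_cancel₀ (show p ≠ 0 by omega) ?_
      linear_combination 2 * hnorm - two_mul_norm_gram q v - v 1 ^ 2 * hq
        - (2 * v 0 + v 1 + p * t) * ht
    obtain ⟨rfl, h1 | h1⟩ := eq_zero_of_sq_add_mul_sq_eq_four hp h4 <;>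
      simp only [vec2_eq_iff] <;> omega
  · obtain rfl : p = 2 * q - 1 := by omega
    rintro (rfl | rfl) <;> refine ⟨?_, fun x => ?_⟩ <;>
      simp only [dotProduct_gram_mulVec, cons_val_zero, cons_val_one]
    · ring
    · exact ⟨x 1, by ring⟩
    · ring
    · exact ⟨-x 1, by ring⟩

theorem statement14_general (p : ℕ) (hp7 : 7 ≤ p) (hp3 : p % 4 = 3) :
    (∀ v : Fin 2 → ℤ, v ≠ 0 → 0 < v ⬝ᵥ !![2, 1; 1, ((p : ℤ) + 1) / 2] *ᵥ v) ∧
    (∀ v : Fin 2 → ℤ, ∃ m : ℤ, v ⬝ᵥ !![2, 1; 1, ((p : ℤ) + 1) / 2] *ᵥ v = 2 * m) ∧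
    (!![2, 1; 1, ((p : ℤ) + 1) / 2]).det = p ∧
    HasLevel ((!![2, 1; 1, ((p : ℤ) + 1) / 2]).map ((↑) : ℤ → ℚ)) (stdLat (Fin 2)) p ∧
    Nat.card {v : Fin 2 → ℤ // v ⬝ᵥ !![2, 1; 1, ((p : ℤ) + 1) / 2] *ᵥ v = 2} = 2 ∧
    Nat.card {v : Fin 2 → ℤ // v ⬝ᵥ !![2, 1; 1, ((p : ℤ) + 1) / 2] *ᵥ v = 2 * p ∧
      ∀ x : Fin 2 → ℤ, (p : ℤ) ∣ v ⬝ᵥ !![2, 1; 1, ((p : ℤ) + 1) / 2] *ᵥ x} = 2 := by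
  have hq : 2 * (((p : ℤ) + 1) / 2) = p + 1 := by omega
  have hev : Even (((p : ℤ) + 1) / 2) := ⟨((p : ℤ) + 1) / 4, by omega⟩
  refine ⟨fun v hv => norm_gram_pos (by omega) hv, fun v => two_dvd_norm_gram hev v,
    by rw [det_gram]; omega, hasLevel_gram hq hev, ?_, ?_⟩
  · exact card_subtype_eq_two_of_iff (by decide) (norm_gram_eq_two_iff (by omega))
  · exact card_subtype_eq_two_of_iff (by decide) (norm_gram_eq_and_dvd_iff hq (by omega))

/-- Let `p ≥ 7` be a prime with `p ≡ 3 (mod 4)` and let `L_p` be the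
lattice `ℤ²` with Gram matrix `[[2,1],[1,(p+1)/2]]`.  Then `L_p` is a positive definite
even lattice of determinant `p` and level `p`, it has exactly two vectors of norm `2`,
and exactly two vectors `v` with `(v,v) = 2p` and `(v,x) ∈ pℤ` for all `x`. -/
theorem statement14 (p : ℕ) (hp : p.Prime) (hp7 : 7 ≤ p) (hp3 : p % 4 = 3) :
    (∀ v : Fin 2 → ℤ, v ≠ 0 → 0 < v ⬝ᵥ !![2, 1; 1, ((p : ℤ) + 1) / 2] *ᵥ v) ∧
    (∀ v : Fin 2 → ℤ, ∃ m : ℤ, v ⬝ᵥ !![2, 1; 1, ((p : ℤ) + 1) / 2] *ᵥ v = 2 * m) ∧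
    (!![2, 1; 1, ((p : ℤ) + 1) / 2]).det = p ∧
    HasLevel ((!![2, 1; 1, ((p : ℤ) + 1) / 2]).map ((↑) : ℤ → ℚ)) (stdLat (Fin 2)) p ∧
    Nat.card {v : Fin 2 → ℤ // v ⬝ᵥ !![2, 1; 1, ((p : ℤ) + 1) / 2] *ᵥ v = 2} = 2 ∧
    Nat.card {v : Fin 2 → ℤ // v ⬝ᵥ !![2, 1; 1, ((p : ℤ) + 1) / 2] *ᵥ v = 2 * p ∧
      ∀ x : Fin 2 → ℤ, (p : ℤ) ∣ v ⬝ᵥ !![2, 1; 1, ((p : ℤ) + 1) / 2] *ᵥ x} = 2 :=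
  statement14_general p hp7 hp3

end LatQ
end
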